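/- arXiv:2512.12319 — 2 statements merged into one kernel-verified Lean document; each statement's English description precedes it below -/
import Mathlib

section
/- Let H = C^d with d ≥ 3 and S the swap operator on H⊗H. If complex numbers λ1,...,λ6 and μ1,...,μ6 satisfy λ1(I⊗X) + λ2(X⊗I) + λ3 S(I⊗X) + λ4 S(X⊗I) + λ5 tr(X)(I⊗I) + λ6 tr(X)S = μ1(I⊗X) + μ2(X⊗I) + μ3 S(I⊗X) + μ4 S(X⊗I) + μ5 tr(X)(I⊗I) + μ6 tr(X)S for all X ∈ B(H), then λ_i = μ_i for i = 1,...,6. -/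
open Matrix Kronecker ComplexOrder

/-- The swap operator on `H ⊗ H`, as a matrix: `S (x ⊗ y) = y ⊗ x`. -/
def swap (n : Type*) [DecidableEq n] : Matrix (n × n) (n × n) ℂ :=
  Matrix.of fun p q => if p.1 = q.2 ∧ p.2 = q.1 then (1 : ℂ) else 0

lemma swap_mul_apply {n : Type*} [DecidableEq n] [Fintype n]
    (M : Matrix (n × n) (n × n) ℂ) (p q : n × n) :
    (swap n * M) p q = M (p.2, p.1) q := by
  rw [Matrix.mul_apply]
  have : ∀ r : n × n, swap n p r * M r q
      = if r = (p.2, p.1) then M (p.2, p.1) q else 0 := by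
    rintro ⟨a, b⟩
    simp only [_root_.swap, Matrix.of_apply, Prod.mk.injEq]
    by_cases h1 : p.1 = b <;> by_cases h2 : p.2 = a <;>
      simp_all [eq_comm] <;> simp [Ne.symm h1, Ne.symm h2]
  simp [this]

lemma swap_apply {n : Type*} [DecidableEq n] (p q : n × n) :
    swap n p q = if p.1 = q.2 ∧ p.2 = q.1 then (1 : ℂ) else 0 := rfl

/-- Uniqueness of the coefficients in the canonical form, for `dim H ≥ 3`. -/
theorem coefficients_unique {d : ℕ} (hd : 3 ≤ d)
    (l1 l2 l3 l4 l5 l6 m1 m2 m3 m4 m5 m6 : ℂ)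
    (h : ∀ X : Matrix (Fin d) (Fin d) ℂ,
      l1 • ((1 : Matrix (Fin d) (Fin d) ℂ) ⊗ₖ X) + l2 • (X ⊗ₖ (1 : Matrix (Fin d) (Fin d) ℂ))
        + l3 • (swap (Fin d) * ((1 : Matrix (Fin d) (Fin d) ℂ) ⊗ₖ X))
        + l4 • (swap (Fin d) * (X ⊗ₖ (1 : Matrix (Fin d) (Fin d) ℂ)))
        + (l5 * X.trace) • (1 : Matrix (Fin d × Fin d) (Fin d × Fin d) ℂ)
        + (l6 * X.trace) • swap (Fin d)
      = m1 • ((1 : Matrix (Fin d) (Fin d) ℂ) ⊗ₖ X) + m2 • (X ⊗ₖ (1 : Matrix (Fin d) (Fin d) ℂ))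
        + m3 • (swap (Fin d) * ((1 : Matrix (Fin d) (Fin d) ℂ) ⊗ₖ X))
        + m4 • (swap (Fin d) * (X ⊗ₖ (1 : Matrix (Fin d) (Fin d) ℂ)))
        + (m5 * X.trace) • (1 : Matrix (Fin d × Fin d) (Fin d × Fin d) ℂ)
        + (m6 * X.trace) • swap (Fin d)) :
    l1 = m1 ∧ l2 = m2 ∧ l3 = m3 ∧ l4 = m4 ∧ l5 = m5 ∧ l6 = m6 := by
  set e0 : Fin d := ⟨0, by omega⟩ with he0
  set e1 : Fin d := ⟨1, by omega⟩ with he1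
  set e2 : Fin d := ⟨2, by omega⟩ with he2
  have h01 : e0 ≠ e1 := by simp [he0, he1, Fin.ext_iff]
  have h02 : e0 ≠ e2 := by simp [he0, he2, Fin.ext_iff]
  have h12 : e1 ≠ e2 := by simp [he1, he2, Fin.ext_iff]
  set X := Matrix.single e0 e1 (1 : ℂ) with hXdef
  have htr : X.trace = 0 := Matrix.trace_single_eq_of_ne e0 e1 1 h01
  have hE : ∀ p q : Fin d × Fin d, _ = _ := fun p q => congrFun (congrFun (h X) p) q
  have k1 : l1 = m1 := by
    have := hE (e2, e0) (e2, e1)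
    simpa [Matrix.add_apply, Matrix.smul_apply, Matrix.kroneckerMap_apply, Matrix.one_apply,
      swap_mul_apply, swap_apply, hXdef, Matrix.single, htr,
      h01, h02, h12, h01.symm, h02.symm, h12.symm] using this
  have k2 : l2 = m2 := by
    have := hE (e0, e2) (e1, e2)
    simpa [Matrix.add_apply, Matrix.smul_apply, Matrix.kroneckerMap_apply, Matrix.one_apply,
      swap_mul_apply, swap_apply, hXdef, Matrix.single, htr,
      h01, h02, h12, h01.symm, h02.symm, h12.symm] using this
  have k3 : l3 = m3 := by
    have := hE (e0, e2) (e2, e1)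
    simpa [Matrix.add_apply, Matrix.smul_apply, Matrix.kroneckerMap_apply, Matrix.one_apply,
      swap_mul_apply, swap_apply, hXdef, Matrix.single, htr,
      h01, h02, h12, h01.symm, h02.symm, h12.symm] using this
  have k4 : l4 = m4 := by
    have := hE (e2, e0) (e1, e2)
    simpa [Matrix.add_apply, Matrix.smul_apply, Matrix.kroneckerMap_apply, Matrix.one_apply,
      swap_mul_apply, swap_apply, hXdef, Matrix.single, htr,
      h01, h02, h12, h01.symm, h02.symm, h12.symm] using this
  have hI := h 1
  have hEI : ∀ p q : Fin d × Fin d, _ = _ := fun p q => congrFun (congrFun hI p) q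
  have htd : (d : ℂ) ≠ 0 := by
    simp only [ne_eq, Nat.cast_eq_zero]; omega
  have k6 : l6 = m6 := by
    have := hEI (e0, e1) (e1, e0)
    simp only [Matrix.add_apply, Matrix.smul_apply, Matrix.kroneckerMap_apply, Matrix.one_apply,
      swap_mul_apply, swap_apply, Matrix.trace_one, Fintype.card_fin, smul_eq_mul,
      h01, h02, h12, h01.symm, h02.symm, h12.symm] at this
    simp only [Prod.mk.injEq] at this
    simp [h01, h01.symm, k1, k2, k3, k4, mul_comm] at this
    rcases this with h' | h'
    · exact h'
    · omega
  have k5 : l5 = m5 := by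
    have := hEI (e0, e1) (e0, e1)
    simp only [Matrix.add_apply, Matrix.smul_apply, Matrix.kroneckerMap_apply, Matrix.one_apply,
      swap_mul_apply, swap_apply, Matrix.trace_one, Fintype.card_fin, smul_eq_mul,
      h01, h02, h12, h01.symm, h02.symm, h12.symm] at this
    simp only [if_true, if_false, false_and, mul_one, mul_zero, add_zero] at this
    have : (l5 - m5) * d = 0 := by linear_combination this - k1 - k2
    rcases mul_eq_zero.1 this with h' | h'
    · exact sub_eq_zero.1 h'
    · exact absurd h' htd
  exact ⟨k1, k2, k3, k4, k5, k6⟩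
end

section
/- Let P be an orthogonal projection on a complex Hilbert space H with complement P⊥ = I - P, let μ1, μ2, μ3, μ4 be complex numbers with μ1·μ4 = μ2·μ3, and let A ∈ B(H). Then ‖μ1 PAP + μ2 PAP⊥ + μ3 P⊥AP + μ4 P⊥AP⊥‖ ≤ max{|μ1|, |μ2|, |μ3|, |μ4|}·‖A‖. -/
/-!
Since `μ₁μ₄ = μ₂μ₃`, the coefficient matrix `(μᵢ)` has rank at most one, so `μ = a bᵀ` with
`max |aᵢ| · max |bⱼ| ≤ max |μᵢ|` (scale a nonzero row). The operator then factors as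
`(a₁P + a₂P⊥) A (b₁P + b₂P⊥)`, and by Pythagoras along `H = ran P ⊕ ran P⊥` each outer factor
has norm at most the largest modulus of its two coefficients.
-/

open scoped InnerProductSpace

lemma exists_mul_eq_mul_of_mul_eq_mul {K : Type*} [Field K] {m₁ m₂ m₃ m₄ : K}
    (h : m₁ * m₄ = m₂ * m₃) (hrow : m₁ ≠ 0 ∨ m₂ ≠ 0) :
    ∃ t : K, m₃ = t * m₁ ∧ m₄ = t * m₂ := by
  rcases hrow with h₁ | h₂
  · exact ⟨m₃ / m₁, by field_simp, by field_simp; linear_combination h⟩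
  · exact ⟨m₄ / m₂, by field_simp; linear_combination -h, by field_simp⟩

lemma exists_outer_factorization_of_mul_eq_mul {𝕜 : Type*} [NormedField 𝕜]
    {m₁ m₂ m₃ m₄ : 𝕜} (h : m₁ * m₄ = m₂ * m₃) :
    ∃ a₁ a₂ b₁ b₂ : 𝕜, a₁ * b₁ = m₁ ∧ a₁ * b₂ = m₂ ∧ a₂ * b₁ = m₃ ∧ a₂ * b₂ = m₄ ∧
      max ‖a₁‖ ‖a₂‖ * max ‖b₁‖ ‖b₂‖ ≤ max (max ‖m₁‖ ‖m₂‖) (max ‖m₃‖ ‖m₄‖) := by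
  by_cases hrow : m₁ = 0 ∧ m₂ = 0
  · obtain ⟨rfl, rfl⟩ := hrow
    refine ⟨0, 1, m₃, m₄, zero_mul _, zero_mul _, one_mul _, one_mul _, ?_⟩
    simp
  · obtain ⟨t, rfl, rfl⟩ := exists_mul_eq_mul_of_mul_eq_mul h (not_and_or.mp hrow)
    refine ⟨1, t, m₁, m₂, one_mul _, one_mul _, rfl, rfl, le_of_eq ?_⟩
    rw [max_mul_of_nonneg _ _ (by positivity), norm_one, one_mul, norm_mul, norm_mul,
      ← mul_max_of_nonneg _ _ (norm_nonneg t)]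

lemma smul_add_smul_one_sub_mul_mul {𝕜 R : Type*} [CommRing 𝕜] [Ring R] [Algebra 𝕜 R]
    (p x : R) (a₁ a₂ b₁ b₂ : 𝕜) :
    (a₁ • p + a₂ • (1 - p)) * x * (b₁ • p + b₂ • (1 - p)) =
      (a₁ * b₁) • (p * x * p) + (a₁ * b₂) • (p * x * (1 - p)) + (a₂ * b₁) • ((1 - p) * x * p)
        + (a₂ * b₂) • ((1 - p) * x * (1 - p)) := by
  simp only [add_mul, mul_add, smul_mul_assoc, mul_smul_comm]
  module

section StarProjection

variable {𝕜 E : Type*} [RCLike 𝕜] [NormedAddCommGroup E] [InnerProductSpace 𝕜 E]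
  [CompleteSpace E] {P : E →L[𝕜] E}

lemma IsStarProjection.inner_apply_sub_apply_eq_zero (hP : IsStarProjection P) (x : E) :
    ⟪P x, x - P x⟫_𝕜 = 0 := by
  have hPP : P (P x) = P x := congr($(hP.isIdempotentElem.eq) x)
  have hsymm : ⟪P x, x - P x⟫_𝕜 = ⟪x, P (x - P x)⟫_𝕜 := hP.isSelfAdjoint.isSymmetric _ _
  rw [hsymm, map_sub, hPP, sub_self, inner_zero_right]

lemma IsStarProjection.norm_smul_add_smul_one_sub_le (hP : IsStarProjection P) (a b : 𝕜) :
    ‖a • P + b • (1 - P)‖ ≤ max ‖a‖ ‖b‖ := by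
  set M := max ‖a‖ ‖b‖
  refine ContinuousLinearMap.opNorm_le_bound _ (by positivity) fun x => ?_
  have horth : ⟪a • P x, b • (x - P x)⟫_𝕜 = 0 := by
    rw [inner_smul_left, inner_smul_right, hP.inner_apply_sub_apply_eq_zero, mul_zero, mul_zero]
  have hx : ‖x‖ * ‖x‖ = ‖P x‖ * ‖P x‖ + ‖x - P x‖ * ‖x - P x‖ := by
    simpa using
      norm_add_sq_eq_norm_sq_add_norm_sq_of_inner_eq_zero _ _ (hP.inner_apply_sub_apply_eq_zero x)
  have hax : ‖a • P x + b • (x - P x)‖ * ‖a • P x + b • (x - P x)‖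
      = ‖a‖ * ‖a‖ * (‖P x‖ * ‖P x‖) + ‖b‖ * ‖b‖ * (‖x - P x‖ * ‖x - P x‖) := by
    rw [norm_add_sq_eq_norm_sq_add_norm_sq_of_inner_eq_zero _ _ horth, norm_smul, norm_smul]
    ring
  have ha : ‖a‖ * ‖a‖ ≤ M * M := mul_self_le_mul_self (norm_nonneg a) (le_max_left _ _)
  have hb : ‖b‖ * ‖b‖ ≤ M * M := mul_self_le_mul_self (norm_nonneg b) (le_max_right _ _)
  have happly : (a • P + b • (1 - P)) x = a • P x + b • (x - P x) := by simp
  refine nonneg_le_nonneg_of_sq_le_sq (by positivity) ?_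
  calc ‖(a • P + b • (1 - P)) x‖ * ‖(a • P + b • (1 - P)) x‖
      = ‖a‖ * ‖a‖ * (‖P x‖ * ‖P x‖) + ‖b‖ * ‖b‖ * (‖x - P x‖ * ‖x - P x‖) := by
        rw [happly, hax]
    _ ≤ M * M * (‖P x‖ * ‖P x‖) + M * M * (‖x - P x‖ * ‖x - P x‖) := by gcongr
    _ = M * ‖x‖ * (M * ‖x‖) := by rw [← mul_add, ← hx]; ring

end StarProjection

/-- Norm bound for `μ₁ PAP + μ₂ PAP⊥ + μ₃ P⊥AP + μ₄ P⊥AP⊥` when `μ₁μ₄ = μ₂μ₃`. -/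
theorem corner_combination_norm_bound {H : Type*} [NormedAddCommGroup H]
    [InnerProductSpace ℂ H] [CompleteSpace H]
    (P : H →L[ℂ] H) (hP : IsSelfAdjoint P) (hP2 : P * P = P)
    (mu1 mu2 mu3 mu4 : ℂ) (hmu : mu1 * mu4 = mu2 * mu3) (A : H →L[ℂ] H) :
    ‖mu1 • (P * A * P) + mu2 • (P * A * (1 - P)) + mu3 • ((1 - P) * A * P)
        + mu4 • ((1 - P) * A * (1 - P))‖
      ≤ max (max ‖mu1‖ ‖mu2‖) (max ‖mu3‖ ‖mu4‖) * ‖A‖ := by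
  obtain ⟨a₁, a₂, b₁, b₂, rfl, rfl, rfl, rfl, hab⟩ :=
    exists_outer_factorization_of_mul_eq_mul hmu
  have hPproj : IsStarProjection P := ⟨hP2, hP⟩
  rw [← smul_add_smul_one_sub_mul_mul]
  calc _ ≤ ‖a₁ • P + a₂ • (1 - P)‖ * ‖A‖ * ‖b₁ • P + b₂ • (1 - P)‖ := norm_mul₃_le
    _ ≤ max ‖a₁‖ ‖a₂‖ * ‖A‖ * max ‖b₁‖ ‖b₂‖ := by
        gcongr <;> exact hPproj.norm_smul_add_smul_one_sub_le _ _
    _ ≤ _ := by rw [mul_right_comm]; gcongr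
end
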